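/- arXiv:1412.2651 — 3 statements merged into one kernel-verified Lean document; each statement's English description precedes it below -/
import Mathlib

section
/- Let g be continuous, concave, and strictly increasing on [0,∞) with g(0)=0 and g(p)/p strictly decreasing on (0,∞). Fix E > 0, B > 0, T > 0. If there exists l > 0 with (E/l)·g(l) ≤ B and B ≤ T·g(E/T), then E/l ≤ T. -/
theorem energy_time_bound
    (g : ℝ → ℝ)
    (hcont : ContinuousOn g (Set.Ici 0))
    (hconc : ConcaveOn ℝ (Set.Ici 0) g)
    (hmono : StrictMonoOn g (Set.Ici 0))
    (hg0 : g 0 = 0)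
    (hratio : StrictAntiOn (fun p => g p / p) (Set.Ioi 0))
    (E B T : ℝ) (hE : 0 < E) (hB : 0 < B) (hT : 0 < T)
    (l : ℝ) (hl : 0 < l)
    (h1 : (E / l) * g l ≤ B)
    (h2 : B ≤ T * g (E / T)) :
    E / l ≤ T := by
  by_contra h
  push_neg at h
  have hET : (0:ℝ) < E / T := div_pos hE hT
  have hlt : l < E / T := by
    rw [lt_div_iff₀ hT]
    calc l * T < (E / l) * l := by nlinarith
    _ = E := by field_simp
  have hr := hratio (Set.mem_Ioi.mpr hl) (Set.mem_Ioi.mpr hET) hlt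
  simp only at hr
  have h3 : E * (g (E / T) / (E / T)) < E * (g l / l) := by
    exact (mul_lt_mul_iff_right₀ hE).mpr hr
  have e1 : T * g (E / T) = E * (g (E / T) / (E / T)) := by
    field_simp
  have e2 : (E / l) * g l = E * (g l / l) := by ring
  linarith
end

section
/- Online algorithm invariant (inductive step): Let g(p)/p be strictly decreasing in p on (0,∞). Suppose at step k−1 we have energy E_{k-1} > 0, remaining bits B_{k-1} > 0, power l_{k-1} > 0 with l_{k-1}/g(l_{k-1}) = E_{k-1}/B_{k-1}, and the invariant g(l_{k-1})/l_{k-1} ≤ B₀/𝓔_{k-1} holds, where 𝓔_{k-1} ≥ E_{k-1} is total energy arrived, B_{k-1} ≤ B₀. After transmitting for time Δ ∈ (0, E_{k-1}/l_{k-1}) and receiving new energy E_j > 0, define E_k = E_{k-1} − l_{k-1}·Δ + E_j, B_k = B_{k-1} − g(l_{k-1})·Δ, 𝓔_k = 𝓔_{k-1} + E_j, and l_k by l_k/g(l_k) = E_k/B_k. Then l_k/g(l_k) > 𝓔_k/B₀, i.e., the strict invariant g(l_k)/l_k < B₀/𝓔_k holds. -/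
theorem online_invariant_inductive_step
    (g : ℝ → ℝ) (hgpos : ∀ p : ℝ, 0 < p → 0 < g p)
    (hratio : StrictAntiOn (fun p => g p / p) (Set.Ioi 0))
    (B₀ Eprev Bprev lprev 𝓔prev Δ Ej Ek Bk 𝓔k lk : ℝ)
    (hB₀ : 0 < B₀)
    (hEprev : 0 < Eprev) (hBprev : 0 < Bprev) (hlprev : 0 < lprev)
    (h𝓔prev : 0 < 𝓔prev)
    (hbalance : lprev / g lprev = Eprev / Bprev)
    (hinv : g lprev / lprev ≤ B₀ / 𝓔prev)
    (h𝓔E : Eprev ≤ 𝓔prev) (hBB₀ : Bprev ≤ B₀)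
    (hΔ : Δ ∈ Set.Ioo 0 (Eprev / lprev)) (hEj : 0 < Ej)
    (hEk : Ek = Eprev - lprev * Δ + Ej)
    (hBk : Bk = Bprev - g lprev * Δ)
    (h𝓔k : 𝓔k = 𝓔prev + Ej)
    (hlk : 0 < lk)
    (hbalance' : lk / g lk = Ek / Bk) :
    lk / g lk > 𝓔k / B₀ := by
  have hg : 0 < g lprev := hgpos lprev hlprev
  obtain ⟨hΔ0, hΔlt⟩ := hΔ
  have hΔl : Δ * lprev < Eprev := (lt_div_iff₀ hlprev).mp hΔlt
  have h2 : lprev * Bprev = Eprev * g lprev :=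
    (div_eq_div_iff (ne_of_gt hg) (ne_of_gt hBprev)).mp hbalance
  have h1 : g lprev * 𝓔prev ≤ B₀ * lprev :=
    (div_le_div_iff₀ hlprev h𝓔prev).mp hinv
  have hBkpos : 0 < Bk := by
    rw [hBk]
    nlinarith [mul_pos hg hΔ0]
  have key : 𝓔k * Bk < Ek * B₀ := by
    subst hEk hBk h𝓔k
    nlinarith [mul_pos hEj (mul_pos hg hΔ0),
      mul_le_mul_of_nonneg_right h1 hBprev.le,
      mul_le_mul_of_nonneg_left hBB₀ hEj.le,
      mul_nonneg hΔ0.le hlprev.le]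
  rw [hbalance']
  exact (div_lt_div_iff₀ hB₀ hBkpos).mpr key
end

section
/- Overshoot bound under the memoryless-type assumption: Let (𝓔ᵢ) be i.i.d. nonnegative integrable random variables bounded by C_t, with E[𝓔₀] > 0, satisfying E[𝓔₀ | 𝓔₀ ≥ γ] ≤ γ + E[𝓔₀] for all γ ∈ [0, C_t). Let 𝓝 = min{n : ∑_{i=0}^{n-1} 𝓔ᵢ ≥ b} with 0 < b ≤ C_t. Then E[𝓝] ≤ b/E[𝓔₀] + 1. -/
/-!
Let `S n = ∑ i < n, X i`, `A n = {S n < b}` and `C n = {S n < b ≤ S (n + 1)}`, the event that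
the walk crosses `b` at step `n`. Since `S` is nondecreasing, summation by parts gives
`∑ n < K, X n 1_{A n} = ∑ n < K, S (n + 1) 1_{C n} + S K 1_{A K}`.
As `X n` is independent of `A n`, the left side has mean `E X₀ ∑ n < K, P (A n)`.
On the right, `S K < b` on `A K`, and given `S n = x < b` the overshoot term is
`(x + X n) 1{X n ≥ b - x}`, whose mean is at most `(b + E X₀) P (X n ≥ b - x)` by the
memoryless-type assumption; the `C n` being disjoint from each other and from `A K`, the right
side has mean at most `b + E X₀`. Finally `min 𝓝 K ≤ ∑ n < K, 1_{A n}`; let `K → ∞`.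
-/

open MeasureTheory ProbabilityTheory

open Finset in
theorem Monotone.sum_range_ite_lt_sub_add_eq {s : ℕ → ℝ} (hs : Monotone s) (b : ℝ) (K : ℕ) :
    ∑ n ∈ range K, (if s n < b then s (n + 1) - s n else 0) + (if s 0 < b then s 0 else 0) =
      ∑ n ∈ range K, (if s n < b ∧ b ≤ s (n + 1) then s (n + 1) else 0) +
        (if s K < b then s K else 0) := by
  induction K with
  | zero => simp
  | succ K ih =>
    have := hs K.le_succ
    rw [sum_range_succ, sum_range_succ]
    split_ifs at ih ⊢ <;> grind

namespace ProbabilityTheory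

section PartialSum

variable {Ω : Type*} {X : ℕ → Ω → ℝ}

def partialSum (X : ℕ → Ω → ℝ) (n : ℕ) (ω : Ω) : ℝ := ∑ i ∈ Finset.range n, X i ω

@[simp] theorem partialSum_zero (ω : Ω) : partialSum X 0 ω = 0 := Finset.sum_range_zero _

theorem partialSum_succ (n : ℕ) (ω : Ω) : partialSum X (n + 1) ω = partialSum X n ω + X n ω :=
  Finset.sum_range_succ _ n

theorem monotone_partialSum (hX : ∀ i ω, 0 ≤ X i ω) (ω : Ω) : Monotone (partialSum X · ω) :=
  monotone_nat_of_le_succ fun n ↦ by simpa [partialSum_succ] using hX n ω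

theorem sum_indicator_partialSum_lt (hX : ∀ i ω, 0 ≤ X i ω) (b : ℝ) (K : ℕ) (ω : Ω) :
    ∑ n ∈ Finset.range K, {ω | partialSum X n ω < b}.indicator (X n) ω =
      ∑ n ∈ Finset.range K, {ω | partialSum X n ω < b ∧ b ≤ partialSum X (n + 1) ω}.indicator
          (partialSum X (n + 1)) ω +
        {ω | partialSum X K ω < b}.indicator (partialSum X K) ω := by
  have := (monotone_partialSum hX ω).sum_range_ite_lt_sub_add_eq b K
  simp only [partialSum_zero, ite_self, add_zero, partialSum_succ, add_sub_cancel_left] at this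
  simpa [Set.indicator_apply, partialSum_succ] using this

theorem natCast_min_sInf_le_sum_indicator (b : ℝ) (K : ℕ) (ω : Ω) :
    min ((sInf {n | b ≤ partialSum X n ω} : ℕ) : ℝ) K ≤
      ∑ n ∈ Finset.range K, {ω | partialSum X n ω < b}.indicator 1 ω := by
  set N := sInf {n | b ≤ partialSum X n ω}
  have below : ∀ n < N, partialSum X n ω < b := fun n hn ↦ not_le.1 (Nat.notMem_of_lt_sInf hn)
  calc min (N : ℝ) K = ∑ n ∈ Finset.range (min N K), (1 : ℝ) := by simp
    _ = ∑ n ∈ Finset.range (min N K), {ω | partialSum X n ω < b}.indicator 1 ω :=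
        Finset.sum_congr rfl fun n hn ↦ (Set.indicator_of_mem (s := {ω | partialSum X n ω < b})
          (below n ((Finset.mem_range.1 hn).trans_le (min_le_left _ _))) 1).symm
    _ ≤ ∑ n ∈ Finset.range K, {ω | partialSum X n ω < b}.indicator 1 ω :=
        Finset.sum_le_sum_of_subset_of_nonneg (Finset.range_subset_range.2 (min_le_right _ _))
          fun _ _ _ ↦ Set.indicator_nonneg (fun _ _ ↦ zero_le_one) _

end PartialSum

variable {Ω : Type*} [MeasurableSpace Ω] {μ : Measure Ω}

section Independence

variable {α β : Type*} [MeasurableSpace α] [MeasurableSpace β]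

theorem IndepFun.setIntegral_preimage_eq_mul {X : Ω → α} {Y : Ω → ℝ} (hXY : IndepFun X Y μ)
    (hX : Measurable X) (hY : AEMeasurable Y μ) {s : Set α} (hs : MeasurableSet s) :
    ∫ ω in X ⁻¹' s, Y ω ∂μ = μ.real (X ⁻¹' s) * ∫ ω, Y ω ∂μ :=
  Indep.setIntegral_eq_mul (f := id) hX.comap_le ((IndepFun_iff_Indep X Y μ).1 hXY)
    hY ⟨s, hs, rfl⟩ aestronglyMeasurable_id

theorem IndepFun.integral_comp_le_integral_comp [IsFiniteMeasure μ] {X : Ω → α} {Y : Ω → β}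
    (hXY : IndepFun X Y μ) (hX : Measurable X) (hY : Measurable Y) {φ ψ : α × β → ℝ}
    (hφ : Measurable φ) (hψ : Measurable ψ)
    (hφi : Integrable (fun ω ↦ φ (X ω, Y ω)) μ) (hψi : Integrable (fun ω ↦ ψ (X ω, Y ω)) μ)
    (hle : ∀ x, ∫ ω, φ (x, Y ω) ∂μ ≤ ∫ ω, ψ (x, Y ω) ∂μ) :
    ∫ ω, φ (X ω, Y ω) ∂μ ≤ ∫ ω, ψ (X ω, Y ω) ∂μ := by
  have hXYm : Measurable fun ω ↦ (X ω, Y ω) := hX.prodMk hY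
  have hlaw := hXY.map_prod_eq_prod_map_map hX.aemeasurable hY.aemeasurable
  have iterated : ∀ f : α × β → ℝ, Measurable f → Integrable (fun ω ↦ f (X ω, Y ω)) μ →
      Integrable f ((μ.map X).prod (μ.map Y)) ∧
      ∫ ω, f (X ω, Y ω) ∂μ = ∫ x, ∫ y, f (x, y) ∂(μ.map Y) ∂(μ.map X) := by
    intro f hf hfi
    have hfi' : Integrable f ((μ.map X).prod (μ.map Y)) := by
      rwa [← hlaw, integrable_map_measure hf.aestronglyMeasurable hXYm.aemeasurable]
    refine ⟨hfi', ?_⟩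
    rw [← integral_map hXYm.aemeasurable hf.aestronglyMeasurable, hlaw, integral_prod _ hfi']
  obtain ⟨hφp, hφeq⟩ := iterated φ hφ hφi
  obtain ⟨hψp, hψeq⟩ := iterated ψ hψ hψi
  rw [hφeq, hψeq]
  refine integral_mono hφp.integral_prod_left hψp.integral_prod_left fun x ↦ ?_
  have slice : ∀ f : α × β → ℝ, Measurable f →
      ∫ y, f (x, y) ∂(μ.map Y) = ∫ ω, f (x, Y ω) ∂μ := fun f hf ↦
    integral_map hY.aemeasurable (hf.comp measurable_prodMk_left).aestronglyMeasurable
  rw [slice φ hφ, slice ψ hψ]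
  exact hle x

end Independence

/-- `E[Y | Y ≥ γ] ≤ γ + E[Y]` for every `γ ∈ s`, multiplied out by `μ {Y ≥ γ}`. -/
def MemorylessTypeOn (μ : Measure Ω) (Y : Ω → ℝ) (s : Set ℝ) : Prop :=
  ∀ γ ∈ s, ∫ ω in {ω | γ ≤ Y ω}, Y ω ∂μ ≤ (γ + ∫ ω, Y ω ∂μ) * μ.real {ω | γ ≤ Y ω}

theorem MemorylessTypeOn.Ici_of_Ico [IsFiniteMeasure μ] {Y : Ω → ℝ} {C : ℝ}
    (h : MemorylessTypeOn μ Y (Set.Ico 0 C)) (hY : Measurable Y) (hYi : Integrable Y μ)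
    (hYC : ∀ ω, Y ω ≤ C) (hmean : 0 ≤ ∫ ω, Y ω ∂μ) : MemorylessTypeOn μ Y (Set.Ici 0) := by
  intro γ hγ
  rcases lt_or_ge γ C with hγC | hCγ
  · exact h γ ⟨hγ, hγC⟩
  calc ∫ ω in {ω | γ ≤ Y ω}, Y ω ∂μ ≤ ∫ ω in {ω | γ ≤ Y ω}, γ ∂μ :=
        setIntegral_mono_on hYi.integrableOn (integrableOn_const)
          (measurableSet_le measurable_const hY) fun ω _ ↦ (hYC ω).trans hCγ
    _ = γ * μ.real {ω | γ ≤ Y ω} := by rw [setIntegral_const, smul_eq_mul, mul_comm]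
    _ ≤ (γ + ∫ ω, Y ω ∂μ) * μ.real {ω | γ ≤ Y ω} := by gcongr; linarith

theorem MemorylessTypeOn.integral_indicator_crossing_le [IsFiniteMeasure μ] {Y : Ω → ℝ}
    (h : MemorylessTypeOn μ Y (Set.Ici 0)) (hY : Measurable Y) (hYi : Integrable Y μ)
    (b x : ℝ) :
    ∫ ω, {p : ℝ × ℝ | p.1 < b ∧ b ≤ p.1 + p.2}.indicator (fun p ↦ p.1 + p.2) (x, Y ω) ∂μ ≤
      ∫ ω, {p : ℝ × ℝ | p.1 < b ∧ b ≤ p.1 + p.2}.indicator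
        (fun _ ↦ b + ∫ ω, Y ω ∂μ) (x, Y ω) ∂μ := by
  by_cases hx : x < b
  swap
  · simp [hx]
  set D := {ω | b - x ≤ Y ω}
  have hD : MeasurableSet D := measurableSet_le measurable_const hY
  have hcross : ∀ (f : ℝ × ℝ → ℝ) ω,
      {p : ℝ × ℝ | p.1 < b ∧ b ≤ p.1 + p.2}.indicator f (x, Y ω) =
        D.indicator (fun ω ↦ f (x, Y ω)) ω := fun f ω ↦ by
    have : b ≤ x + Y ω ↔ b - x ≤ Y ω := by constructor <;> intro <;> linarith
    simp [Set.indicator_apply, D, hx, this]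
  simp only [hcross, integral_indicator hD, setIntegral_const, smul_eq_mul]
  rw [integral_add (integrable_const x) hYi.integrableOn, setIntegral_const, smul_eq_mul]
  have := h (b - x) (sub_nonneg.2 hx.le)
  linarith

theorem integral_le_of_forall_integral_min_le {f : Ω → ℝ} {F : ℕ → Ω → ℝ} {B : ℝ} (hB : 0 ≤ B)
    (hF : ∀ K, Integrable (F K) μ) (hFB : ∀ K, ∫ ω, F K ω ∂μ ≤ B)
    (hfF : ∀ (K : ℕ) ω, min (f ω) K ≤ F K ω) : ∫ ω, f ω ∂μ ≤ B := by
  by_cases hf : Integrable f μ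
  swap
  · rwa [integral_undef hf]
  have hdom : ∀ (K : ℕ) ω, ‖min (f ω) K‖ ≤ ‖f ω‖ := fun K ω ↦ by
    rcases le_total (f ω) K with h | h
    · rw [min_eq_left h]
    · rw [min_eq_right h, Real.norm_natCast, Real.norm_eq_abs]
      exact h.trans (le_abs_self _)
  have hmeas : ∀ K : ℕ, AEStronglyMeasurable (fun ω ↦ min (f ω) K) μ := fun K ↦
    hf.1.inf aestronglyMeasurable_const
  have hlim : Filter.Tendsto (fun K : ℕ ↦ ∫ ω, min (f ω) K ∂μ) Filter.atTop
      (nhds (∫ ω, f ω ∂μ)) :=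
    tendsto_integral_of_dominated_convergence _ hmeas hf.norm
      (fun K ↦ ae_of_all _ (hdom K)) (ae_of_all _ fun ω ↦ tendsto_atTop_of_eventually_const
        (i₀ := ⌈f ω⌉₊) fun K hK ↦ min_eq_left (Nat.ceil_le.1 hK))
  refine le_of_tendsto' hlim fun K ↦ ?_
  exact (integral_mono (hf.mono (hmeas K) (ae_of_all _ (hdom K))) (hF K) (hfF K)).trans (hFB K)

section RandomWalk

variable {X : ℕ → Ω → ℝ}

theorem measurable_partialSum (hX : ∀ i, Measurable (X i)) (n : ℕ) :
    Measurable (partialSum X n) :=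
  Finset.measurable_fun_sum _ fun i _ ↦ hX i

theorem integrable_partialSum (hX : ∀ i, Integrable (X i) μ) (n : ℕ) :
    Integrable (partialSum X n) μ :=
  integrable_finsetSum _ fun i _ ↦ hX i

theorem iIndepFun.indepFun_partialSum (hindep : iIndepFun X μ) (hX : ∀ i, Measurable (X i))
    (n : ℕ) : IndepFun (partialSum X n) (X n) μ := by
  have := hindep.indepFun_finsetSum_of_notMem hX (Finset.notMem_range_self (n := n))
  convert this using 1
  ext ω
  simp [partialSum]

theorem setIntegral_partialSum_crossing_le [IsFiniteMeasure μ] (hX : ∀ i, Measurable (X i))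
    (hXi : ∀ i, Integrable (X i) μ) (hindep : iIndepFun X μ)
    (hident : ∀ i, IdentDistrib (X i) (X 0) μ μ) (hmem : MemorylessTypeOn μ (X 0) (Set.Ici 0))
    (b : ℝ) (n : ℕ) :
    ∫ ω in {ω | partialSum X n ω < b ∧ b ≤ partialSum X (n + 1) ω}, partialSum X (n + 1) ω ∂μ ≤
      (b + ∫ ω, X 0 ω ∂μ) * μ.real {ω | partialSum X n ω < b ∧ b ≤ partialSum X (n + 1) ω} := by
  set cross := {p : ℝ × ℝ | p.1 < b ∧ b ≤ p.1 + p.2}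
  have hsum : Measurable fun p : ℝ × ℝ ↦ p.1 + p.2 := by fun_prop
  have hcross : MeasurableSet cross :=
    (measurableSet_lt measurable_fst measurable_const).inter
      (measurableSet_le measurable_const hsum)
  set C := {ω | partialSum X n ω < b ∧ b ≤ partialSum X (n + 1) ω}
  have hC : MeasurableSet C :=
    (measurableSet_lt (measurable_partialSum hX n) measurable_const).inter
      (measurableSet_le measurable_const (measurable_partialSum hX (n + 1)))
  have hrepr : ∀ f : ℝ × ℝ → ℝ, (fun ω ↦ cross.indicator f (partialSum X n ω, X n ω)) =
      C.indicator (fun ω ↦ f (partialSum X n ω, X n ω)) := fun f ↦ by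
    ext ω
    simp [Set.indicator_apply, cross, C, partialSum_succ]
  have bound := (hindep.indepFun_partialSum hX n).integral_comp_le_integral_comp
    (measurable_partialSum hX n) (hX n)
    (φ := cross.indicator fun p ↦ p.1 + p.2) (ψ := cross.indicator fun _ ↦ b + ∫ ω, X 0 ω ∂μ)
    (hsum.indicator hcross) (measurable_const.indicator hcross)
    (by rw [hrepr]; exact ((integrable_partialSum hXi n).add (hXi n)).indicator hC)
    (by rw [hrepr]; exact (integrable_const _).indicator hC) fun x ↦ by
      have law : ∀ f : ℝ × ℝ → ℝ, Measurable f → ∫ ω, f (x, X n ω) ∂μ = ∫ ω, f (x, X 0 ω) ∂μ :=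
        fun f hf ↦ ((hident n).comp (hf.comp measurable_prodMk_left)).integral_eq
      rw [law _ (hsum.indicator hcross), law _ (measurable_const.indicator hcross)]
      exact hmem.integral_indicator_crossing_le (hX 0) (hXi 0) b x
  rw [hrepr, hrepr, integral_indicator hC, integral_indicator hC, setIntegral_const] at bound
  simpa [partialSum_succ, mul_comm] using bound

theorem sum_setIntegral_partialSum_lt_eq (hX : ∀ i, Measurable (X i)) (hX0 : ∀ i ω, 0 ≤ X i ω)
    (hXi : ∀ i, Integrable (X i) μ) (b : ℝ) (K : ℕ) :
    ∑ n ∈ Finset.range K, ∫ ω in {ω | partialSum X n ω < b}, X n ω ∂μ =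
      ∑ n ∈ Finset.range K, ∫ ω in {ω | partialSum X n ω < b ∧ b ≤ partialSum X (n + 1) ω},
          partialSum X (n + 1) ω ∂μ +
        ∫ ω in {ω | partialSum X K ω < b}, partialSum X K ω ∂μ := by
  have hA : ∀ n, MeasurableSet {ω | partialSum X n ω < b} := fun n ↦
    measurableSet_lt (measurable_partialSum hX n) measurable_const
  have hC : ∀ n, MeasurableSet {ω | partialSum X n ω < b ∧ b ≤ partialSum X (n + 1) ω} :=
    fun n ↦ (hA n).inter (measurableSet_le measurable_const (measurable_partialSum hX (n + 1)))
  have := congrArg (∫ ω, · ω ∂μ) (funext (sum_indicator_partialSum_lt hX0 b K))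
  simp only at this
  rw [integral_finsetSum _ fun n _ ↦ (hXi n).indicator (hA n), integral_add
    (integrable_finsetSum _ fun n _ ↦ (integrable_partialSum hXi _).indicator (hC n))
    ((integrable_partialSum hXi K).indicator (hA K)), integral_finsetSum _ fun n _ ↦
    (integrable_partialSum hXi _).indicator (hC n)] at this
  simpa only [integral_indicator (hA _), integral_indicator (hC _)] using this

theorem sum_measureReal_partialSum_crossing [IsFiniteMeasure μ] (hX : ∀ i, Measurable (X i))
    (hX0 : ∀ i ω, 0 ≤ X i ω) (b : ℝ) (K : ℕ) :
    ∑ n ∈ Finset.range K, μ.real {ω | partialSum X n ω < b ∧ b ≤ partialSum X (n + 1) ω} =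
      μ.real {ω | partialSum X 0 ω < b} - μ.real {ω | partialSum X K ω < b} := by
  set A := fun n ↦ {ω | partialSum X n ω < b}
  have hAC : ∀ n, {ω | partialSum X n ω < b ∧ b ≤ partialSum X (n + 1) ω} = A n \ A (n + 1) :=
    fun n ↦ by ext; simp [A]
  have hAA : ∀ n, A (n + 1) ⊆ A n := fun n ω hω ↦
    (monotone_partialSum hX0 ω n.le_succ).trans_lt hω
  have hA : ∀ n, MeasurableSet (A n) := fun n ↦
    measurableSet_lt (measurable_partialSum hX n) measurable_const
  simp only [hAC, fun n ↦ measureReal_sdiff (μ := μ) (hAA n) (hA (n + 1))]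
  exact Finset.sum_range_sub' _ K

theorem integral_mul_sum_measureReal_partialSum_lt_le [IsProbabilityMeasure μ]
    (hX : ∀ i, Measurable (X i)) (hX0 : ∀ i ω, 0 ≤ X i ω) (hXi : ∀ i, Integrable (X i) μ)
    (hindep : iIndepFun X μ) (hident : ∀ i, IdentDistrib (X i) (X 0) μ μ)
    (hmem : MemorylessTypeOn μ (X 0) (Set.Ici 0)) {b : ℝ} (hb : 0 ≤ b) (K : ℕ) :
    (∫ ω, X 0 ω ∂μ) * ∑ n ∈ Finset.range K, μ.real {ω | partialSum X n ω < b} ≤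
      b + ∫ ω, X 0 ω ∂μ := by
  set m := ∫ ω, X 0 ω ∂μ
  set A := fun n ↦ {ω | partialSum X n ω < b}
  have wald : ∀ n, ∫ ω in A n, X n ω ∂μ = μ.real (A n) * m := fun n ↦
    ((hindep.indepFun_partialSum hX n).setIntegral_preimage_eq_mul (measurable_partialSum hX n)
      (hX n).aemeasurable measurableSet_Iio).trans (by rw [(hident n).integral_eq]; rfl)
  have below : ∫ ω in A K, partialSum X K ω ∂μ ≤ b * μ.real (A K) := by
    calc ∫ ω in A K, partialSum X K ω ∂μ ≤ ∫ _ in A K, b ∂μ :=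
          setIntegral_mono_on (integrable_partialSum hXi K).integrableOn (integrable_const b)
            (measurableSet_lt (measurable_partialSum hX K) measurable_const) fun ω hω ↦ hω.le
      _ = b * μ.real (A K) := by rw [setIntegral_const, smul_eq_mul, mul_comm]
  have hm : 0 ≤ m := integral_nonneg (hX0 0)
  have hA0 : μ.real (A 0) ≤ 1 := measureReal_le_one
  have hAK : 0 ≤ μ.real (A K) := measureReal_nonneg
  calc m * ∑ n ∈ Finset.range K, μ.real (A n)
      = ∑ n ∈ Finset.range K, ∫ ω in A n, X n ω ∂μ := by
        rw [Finset.mul_sum]; simp only [wald, mul_comm]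
    _ ≤ (b + m) * (μ.real (A 0) - μ.real (A K)) + b * μ.real (A K) := by
        rw [sum_setIntegral_partialSum_lt_eq hX hX0 hXi, ←
          sum_measureReal_partialSum_crossing hX hX0, Finset.mul_sum]
        gcongr with n
        exact setIntegral_partialSum_crossing_le hX hXi hindep hident hmem b n
    _ ≤ b + m := by nlinarith

end RandomWalk

end ProbabilityTheory

theorem hitting_time_bound_memoryless_type_general
    {Ω : Type*} [MeasurableSpace Ω] (μ : Measure Ω) [IsProbabilityMeasure μ]
    (𝓔 : ℕ → Ω → ℝ)
    (hmeas : ∀ i, Measurable (𝓔 i))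
    (hnonneg : ∀ i ω, 0 ≤ 𝓔 i ω)
    (Ct : ℝ)
    (hbdd : ∀ i ω, 𝓔 i ω ≤ Ct)
    (hint : Integrable (𝓔 0) μ)
    (hmean : 0 < ∫ ω, 𝓔 0 ω ∂μ)
    (hindep : iIndepFun 𝓔 μ)
    (hident : ∀ i, IdentDistrib (𝓔 i) (𝓔 0) μ μ)
    (hcond : ∀ γ ∈ Set.Ico (0:ℝ) Ct,
      (∫ ω in {ω | γ ≤ 𝓔 0 ω}, 𝓔 0 ω ∂μ) ≤
        (γ + ∫ ω, 𝓔 0 ω ∂μ) * (μ {ω | γ ≤ 𝓔 0 ω}).toReal)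
    (b : ℝ) (hb0 : 0 < b)
    (𝓝 : Ω → ℕ)
    (h𝓝 : ∀ ω, 𝓝 ω = sInf {n : ℕ | b ≤ ∑ i ∈ Finset.range n, 𝓔 i ω}) :
    (∫ ω, (𝓝 ω : ℝ) ∂μ) ≤ b / (∫ ω, 𝓔 0 ω ∂μ) + 1 := by
  set m := ∫ ω, 𝓔 0 ω ∂μ
  have hintegrable : ∀ i, Integrable (𝓔 i) μ := fun i ↦ (hident i).integrable_iff.2 hint
  have hmem : MemorylessTypeOn μ (𝓔 0) (Set.Ici 0) :=
    MemorylessTypeOn.Ici_of_Ico hcond (hmeas 0) hint (hbdd 0) hmean.le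
  have hsum : ∀ K, ∑ n ∈ Finset.range K, μ.real {ω | partialSum 𝓔 n ω < b} ≤ b / m + 1 :=
    fun K ↦ by
      rw [div_add_one hmean.ne', le_div_iff₀' hmean]
      exact integral_mul_sum_measureReal_partialSum_lt_le hmeas hnonneg hintegrable hindep hident
        hmem hb0.le K
  have hA : ∀ n, MeasurableSet {ω | partialSum 𝓔 n ω < b} := fun n ↦
    measurableSet_lt (measurable_partialSum hmeas n) measurable_const
  refine integral_le_of_forall_integral_min_le (by positivity)
    (F := fun K ω ↦ ∑ n ∈ Finset.range K, {ω | partialSum 𝓔 n ω < b}.indicator 1 ω)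
    (fun K ↦ integrable_finsetSum _ fun n _ ↦ (integrable_const 1).indicator (hA n))
    (fun K ↦ ?_) fun K ω ↦ ?_
  · rw [integral_finsetSum _ fun n _ ↦ (integrable_const 1).indicator (hA n)]
    simpa only [integral_indicator_one (hA _)] using hsum K
  · rw [h𝓝 ω]
    exact natCast_min_sInf_le_sum_indicator b K ω

theorem hitting_time_bound_memoryless_type
    {Ω : Type*} [MeasurableSpace Ω] (μ : Measure Ω) [IsProbabilityMeasure μ]
    (𝓔 : ℕ → Ω → ℝ)
    (hmeas : ∀ i, Measurable (𝓔 i))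
    (hnonneg : ∀ i ω, 0 ≤ 𝓔 i ω)
    (Ct : ℝ) (hCt : 0 < Ct)
    (hbdd : ∀ i ω, 𝓔 i ω ≤ Ct)
    (hint : Integrable (𝓔 0) μ)
    (hmean : 0 < ∫ ω, 𝓔 0 ω ∂μ)
    (hindep : iIndepFun 𝓔 μ)
    (hident : ∀ i, IdentDistrib (𝓔 i) (𝓔 0) μ μ)
    (hcond : ∀ γ ∈ Set.Ico (0:ℝ) Ct,
      (∫ ω in {ω | γ ≤ 𝓔 0 ω}, 𝓔 0 ω ∂μ) ≤
        (γ + ∫ ω, 𝓔 0 ω ∂μ) * (μ {ω | γ ≤ 𝓔 0 ω}).toReal)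
    (b : ℝ) (hb0 : 0 < b) (hbCt : b ≤ Ct)
    (𝓝 : Ω → ℕ)
    (h𝓝 : ∀ ω, 𝓝 ω = sInf {n : ℕ | b ≤ ∑ i ∈ Finset.range n, 𝓔 i ω}) :
    (∫ ω, (𝓝 ω : ℝ) ∂μ) ≤ b / (∫ ω, 𝓔 0 ω ∂μ) + 1 :=
  hitting_time_bound_memoryless_type_general μ 𝓔 hmeas hnonneg Ct hbdd hint hmean hindep hident
    hcond b hb0 𝓝 h𝓝
end
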